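/- Fix an odd integer b = 2k+1 with k ≥ 1, ρ ∈ [0,1), and γ ∈ (0,1]. Define T(u) = ρ·γ·u + (1-ρ)·f_b(γ·u) for u ∈ [0,1] and α = γ·(ρ + (1-ρ)·f_b'(0)) where f_b'(0) = b·C(b-1,(b-1)/2)/2^{b-1}. Assume α > 1 and let μ* ∈ (0,1] be the unique positive fixed point of T. Then there exist constants C₁, C₂, C₃ ≥ 0 depending only on (b, ρ, γ) such that for every μ₀ ∈ (0,1] and every ε ∈ (0,1), the iterates μ_{t+1} = T(μ_t) satisfy μ_L ≥ (1-ε)·μ* for all integers L ≥ C₁·log(1/μ₀) + C₂·log(1/ε) + C₃. -/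

import Mathlib

open Finset Filter

/-- The upper binomial tail `F(p) = ∑_{j=k+1}^{2k+1} C(2k+1,j) p^j (1-p)^{2k+1-j}`. -/
noncomputable def majF (k : ℕ) (p : ℝ) : ℝ :=
  ∑ j ∈ Finset.Icc (k + 1) (2 * k + 1),
    (Nat.choose (2 * k + 1) j : ℝ) * p ^ j * (1 - p) ^ (2 * k + 1 - j)

/-- The majority map `f_b(u) = 2 F((1+u)/2) - 1` for odd fan-in `b = 2k+1`. -/
noncomputable def majMap (k : ℕ) (u : ℝ) : ℝ :=
  2 * majF k ((1 + u) / 2) - 1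

/-- The one-layer recursion map `T(u) = ρ γ u + (1-ρ) f_b(γ u)` for fan-in `b = 2k+1`. -/
noncomputable def Tmap (k : ℕ) (ρ γ u : ℝ) : ℝ :=
  ρ * γ * u + (1 - ρ) * majMap k (γ * u)

/-- The derivative of the majority map at the origin:
`f_b'(0) = b C(b-1,(b-1)/2)/2^{b-1} = (2k+1) C(2k,k)/2^{2k}`. -/
noncomputable def majPrimeZero (k : ℕ) : ℝ :=
  (2 * k + 1 : ℝ) * (Nat.choose (2 * k) k : ℝ) / 2 ^ (2 * k)

/-- The effective per-layer gain `α = γ (ρ + (1-ρ) f_b'(0))`. -/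
noncomputable def alphaGain (k : ℕ) (ρ γ : ℝ) : ℝ :=
  γ * (ρ + (1 - ρ) * majPrimeZero k)

/-!
`T` is monotone and concave on `[0,1]` with `T 0 = 0`: its derivative
`ρ γ + (1 - ρ) γ f_b'(0) (1 - (γ u)²)^k` is nonnegative and decreasing there. For such a map with a
unique fixed point `μ*` in `(0,1]`, the point `h = μ*/2` satisfies `T h > h`, and concavity gives
`T u ≥ (T h / h) u` on `[0,h]`; so the iterates pass `h` after `O(log(1/μ₀))` steps. On `[h, μ*]`
the chord from `h` to `μ*` lies below `T`, hence the distance to `μ*` shrinks by a fixed factor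
`q < 1` at each step, and `O(log(1/ε))` more steps bring it below `ε μ*`.
-/

lemma one_le_pow_mul_of_log_inv_le {β c : ℝ} {n : ℕ} (hβ : 0 < β) (hc : 0 < c)
    (hn : Real.log (1 / c) ≤ n * Real.log β) : 1 ≤ β ^ n * c := by
  rw [← Real.log_pow, Real.log_le_log_iff (by positivity) (by positivity)] at hn
  rwa [div_le_iff₀ hc] at hn

lemma exists_add_eq_of_log_le {β q μ₀ ε : ℝ} {L : ℕ} (hβ : 1 < β) (hq₀ : 0 < q) (hq₁ : q < 1)
    (hμ₀ : μ₀ ∈ Set.Ioc 0 1) (hε : ε ∈ Set.Ioo 0 1)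
    (hL : 1 / Real.log β * Real.log (1 / μ₀) + 1 / Real.log (1 / q) * Real.log (1 / ε) + 1 ≤ L) :
    ∃ t s : ℕ, L = t + s ∧ 1 ≤ β ^ t * μ₀ ∧ q ^ s ≤ ε := by
  have hlogβ : 0 < Real.log β := Real.log_pos hβ
  have hlogq : 0 < Real.log (1 / q) := Real.log_pos (one_lt_one_div hq₀ hq₁)
  set t := ⌈Real.log (1 / μ₀) / Real.log β⌉₊
  have ht := Nat.ceil_lt_add_one
    (div_nonneg (Real.log_nonneg (one_le_one_div hμ₀.1 hμ₀.2)) hlogβ.le)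
  have hY := div_nonneg (Real.log_nonneg (one_le_one_div hε.1 hε.2.le)) hlogq.le
  rw [one_div_mul_eq_div, one_div_mul_eq_div] at hL
  obtain ⟨s, rfl⟩ := Nat.exists_eq_add_of_le (Nat.cast_le.1 (by linarith : (t : ℝ) ≤ L))
  refine ⟨t, s, rfl, one_le_pow_mul_of_log_inv_le (by linarith) hμ₀.1
    ((div_le_iff₀ hlogβ).1 (Nat.le_ceil _)), ?_⟩
  have := one_le_pow_mul_of_log_inv_le (β := 1 / q) (n := s) (by positivity) hε.1
    ((div_le_iff₀ hlogq).1 (by push_cast at hL; linarith))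
  rwa [one_div_pow, div_mul_eq_mul_div, one_mul, one_le_div (by positivity)] at this

section ConcaveIteration

variable {f : ℝ → ℝ}

lemma ConcaveOn.secant_le_of_mem_Icc {s : Set ℝ} (hf : ConcaveOn ℝ s f) {a b u : ℝ} (ha : a ∈ s)
    (hb : b ∈ s) (hab : a < b) (hu : u ∈ Set.Icc a b) :
    f a + (u - a) / (b - a) * (f b - f a) ≤ f u := by
  have hba : b - a ≠ 0 := (sub_pos.2 hab).ne'
  set θ := (u - a) / (b - a)
  have hθ₀ : 0 ≤ θ := div_nonneg (by linarith [hu.1]) (by linarith)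
  have hθ₁ : θ ≤ 1 := div_le_one_of_le₀ (by linarith [hu.2]) (by linarith)
  have hcomb : (1 - θ) * a + θ * b = u := by
    simp only [θ]
    field_simp
    ring
  have := hf.2 ha hb (sub_nonneg.2 hθ₁) hθ₀ (sub_add_cancel 1 θ)
  simp only [smul_eq_mul, hcomb] at this
  linarith

lemma ConcaveOn.div_mul_le_of_map_zero {s : Set ℝ} (hf : ConcaveOn ℝ s f) (hf0 : f 0 = 0)
    (h0 : 0 ∈ s) {a b : ℝ} (hb : b ∈ s) (ha : 0 ≤ a) (hab : a ≤ b) : a / b * f b ≤ f a := by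
  obtain rfl | hb₀ := (ha.trans hab).eq_or_lt
  · simp [le_antisymm hab ha, hf0]
  simpa [hf0] using hf.secant_le_of_mem_Icc h0 hb hb₀ ⟨ha, hab⟩

lemma apply_mem_Ioc_of_concaveOn (hconc : ConcaveOn ℝ (Set.Icc 0 1) f)
    (hmono : MonotoneOn f (Set.Icc 0 1)) (hf0 : f 0 = 0) {x : ℝ} (hx : x ∈ Set.Ioc 0 1)
    (hfix : f x = x) {u : ℝ} (hu : u ∈ Set.Ioc 0 1) : f u ∈ Set.Ioc 0 1 := by
  have h0 : (0 : ℝ) ∈ Set.Icc 0 1 := Set.left_mem_Icc.2 zero_le_one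
  rcases le_total u x with hux | hxu
  · have hlow := hconc.div_mul_le_of_map_zero hf0 h0 (Set.Ioc_subset_Icc_self hx) hu.1.le hux
    rw [hfix, div_mul_cancel₀ _ hx.1.ne'] at hlow
    have hup := hmono (Set.Ioc_subset_Icc_self hu) (Set.Ioc_subset_Icc_self hx) hux
    exact ⟨hu.1.trans_le hlow, (hup.trans_eq hfix).trans hx.2⟩
  · have hlow := hmono (Set.Ioc_subset_Icc_self hx) (Set.Ioc_subset_Icc_self hu) hxu
    have hup := hconc.div_mul_le_of_map_zero hf0 h0 (Set.Ioc_subset_Icc_self hu) hx.1.le hxu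
    rw [hfix, div_mul_eq_mul_div, div_le_iff₀ (hx.1.trans_le hxu)] at hup
    exact ⟨hx.1.trans_le (hfix ▸ hlow), by nlinarith [hx.1, hu.2]⟩

lemma min_pow_mul_le_seq_of_concaveOn (hconc : ConcaveOn ℝ (Set.Icc 0 1) f)
    (hmono : MonotoneOn f (Set.Icc 0 1)) (hf0 : f 0 = 0) {h : ℝ} (hh : h ∈ Set.Ioc 0 1)
    (hgain : h ≤ f h) {seq : ℕ → ℝ} (hseq : ∀ t, seq t ∈ Set.Icc 0 1)
    (hrec : ∀ t, seq (t + 1) = f (seq t)) (t : ℕ) :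
    min h ((f h / h) ^ t * seq 0) ≤ seq t := by
  induction t with
  | zero => simp
  | succ t ih =>
    rw [hrec]
    rcases le_or_gt h (seq t) with hht | hth
    · exact (min_le_left _ _).trans
        (hgain.trans (hmono (Set.Ioc_subset_Icc_self hh) (hseq t) hht))
    have hgrow := hconc.div_mul_le_of_map_zero hf0 (Set.left_mem_Icc.2 zero_le_one)
      (Set.Ioc_subset_Icc_self hh) (hseq t).1 hth.le
    have hpow := (min_le_iff.1 ih).resolve_left hth.not_ge
    have hβ : 0 ≤ f h / h := div_nonneg (hh.1.le.trans hgain) hh.1.le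
    calc min h ((f h / h) ^ (t + 1) * seq 0)
        ≤ f h / h * ((f h / h) ^ t * seq 0) := (min_le_right _ _).trans_eq (by ring)
      _ ≤ f h / h * seq t := mul_le_mul_of_nonneg_left hpow hβ
      _ = seq t / h * f h := by ring
      _ ≤ f (seq t) := hgrow

lemma sub_apply_le_of_concaveOn (hconc : ConcaveOn ℝ (Set.Icc 0 1) f)
    (hmono : MonotoneOn f (Set.Icc 0 1)) {h x : ℝ} (hh : 0 ≤ h) (hhx : h < x) (hx : x ≤ 1)
    (hfix : f x = x) {u : ℝ} (hu : u ∈ Set.Icc h 1) :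
    x - f u ≤ (x - f h) / (x - h) * max (x - u) 0 := by
  have hhI : h ∈ Set.Icc 0 1 := ⟨hh, hhx.le.trans hx⟩
  have hxI : x ∈ Set.Icc 0 1 := ⟨hh.trans hhx.le, hx⟩
  have huI : u ∈ Set.Icc 0 1 := ⟨hh.trans hu.1, hu.2⟩
  rcases le_total u x with hux | hxu
  · have hsec := hconc.secant_le_of_mem_Icc hhI hxI hhx ⟨hu.1, hux⟩
    rw [hfix] at hsec
    rw [max_eq_left (sub_nonneg.2 hux)]
    have hxh : x - h ≠ 0 := (sub_pos.2 hhx).ne'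
    calc x - f u ≤ x - (f h + (u - h) / (x - h) * (x - f h)) := by linarith
      _ = (x - f h) / (x - h) * (x - u) := by field_simp; ring
  · have hq : 0 ≤ (x - f h) / (x - h) :=
      div_nonneg (sub_nonneg.2 (hfix ▸ hmono hhI hxI hhx.le)) (sub_pos.2 hhx).le
    have := hmono hxI huI hxu
    nlinarith [le_max_right (x - u) 0]

lemma le_seq_and_sub_seq_le_pow_of_concaveOn (hconc : ConcaveOn ℝ (Set.Icc 0 1) f)
    (hmono : MonotoneOn f (Set.Icc 0 1)) {h x q : ℝ} (hh : 0 ≤ h) (hhx : h < x) (hx : x ≤ 1)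
    (hfix : f x = x) (hgain : h ≤ f h) (hq₀ : 0 ≤ q) (hq : (x - f h) / (x - h) ≤ q)
    {seq : ℕ → ℝ} (hseq : ∀ t, seq t ∈ Set.Icc 0 1) (hrec : ∀ t, seq (t + 1) = f (seq t))
    {t : ℕ} (ht : h ≤ seq t) (s : ℕ) :
    h ≤ seq (t + s) ∧ x - seq (t + s) ≤ q ^ s * max (x - seq t) 0 := by
  induction s with
  | zero => simp [ht]
  | succ s ih =>
    obtain ⟨hhs, hdist⟩ := ih
    have hhI : h ∈ Set.Icc 0 1 := ⟨hh, hhx.le.trans hx⟩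
    rw [← add_assoc, hrec]
    refine ⟨hgain.trans (hmono hhI (hseq _) hhs), ?_⟩
    have hstep := sub_apply_le_of_concaveOn hconc hmono hh hhx hx hfix ⟨hhs, (hseq _).2⟩
    have hmax : max (x - seq (t + s)) 0 ≤ q ^ s * max (x - seq t) 0 :=
      max_le hdist (by positivity)
    calc x - f (seq (t + s)) ≤ (x - f h) / (x - h) * max (x - seq (t + s)) 0 := hstep
      _ ≤ q * (q ^ s * max (x - seq t) 0) := mul_le_mul hq hmax (le_max_right _ _) hq₀
      _ = q ^ (s + 1) * max (x - seq t) 0 := by ring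

lemma half_lt_apply_half_of_concaveOn (hconc : ConcaveOn ℝ (Set.Icc 0 1) f) (hf0 : f 0 = 0)
    {x : ℝ} (hx : x ∈ Set.Ioc 0 1) (hfix : f x = x)
    (huniq : ∀ y ∈ Set.Ioc (0 : ℝ) 1, f y = y → y = x) : x / 2 < f (x / 2) := by
  have hhalf : x / 2 ∈ Set.Ioc 0 1 := ⟨by linarith [hx.1], by linarith [hx.2]⟩
  have hle := hconc.div_mul_le_of_map_zero hf0 (Set.left_mem_Icc.2 zero_le_one)
    (Set.Ioc_subset_Icc_self hx) hhalf.1.le (by linarith [hx.1])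
  rw [hfix, div_mul_cancel₀ _ hx.1.ne'] at hle
  exact hle.lt_of_ne fun e => (half_lt_self hx.1).ne (huniq _ hhalf e.symm)

theorem ConcaveOn.exists_mixing_depth (hconc : ConcaveOn ℝ (Set.Icc 0 1) f)
    (hmono : MonotoneOn f (Set.Icc 0 1)) (hf0 : f 0 = 0) {x : ℝ} (hx : x ∈ Set.Ioc 0 1)
    (hfix : f x = x) (huniq : ∀ y ∈ Set.Ioc (0 : ℝ) 1, f y = y → y = x) :
    ∃ C₁ C₂ C₃ : ℝ, 0 ≤ C₁ ∧ 0 ≤ C₂ ∧ 0 ≤ C₃ ∧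
      ∀ μ₀ ∈ Set.Ioc (0 : ℝ) 1, ∀ ε ∈ Set.Ioo (0 : ℝ) 1,
        ∀ seq : ℕ → ℝ, seq 0 = μ₀ → (∀ t, seq (t + 1) = f (seq t)) →
        ∀ L : ℕ, C₁ * Real.log (1 / μ₀) + C₂ * Real.log (1 / ε) + C₃ ≤ L →
          (1 - ε) * x ≤ seq L := by
  set h := x / 2
  have hhx : h < x := half_lt_self hx.1
  have hh : h ∈ Set.Ioc 0 1 := ⟨half_pos hx.1, hhx.le.trans hx.2⟩
  have hgain : h < f h := half_lt_apply_half_of_concaveOn hconc hf0 hx hfix huniq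
  have hβ : 1 < f h / h := (one_lt_div hh.1).2 hgain
  -- `max` keeps `q > 0`, so that `log (1 / q)` is not the junk value `log 0`.
  set q := max ((x - f h) / (x - h)) (1 / 2)
  have hq₀ : 0 < q := lt_max_of_lt_right one_half_pos
  have hq₁ : q < 1 := max_lt ((div_lt_one (sub_pos.2 hhx)).2 (by linarith)) one_half_lt_one
  refine ⟨1 / Real.log (f h / h), 1 / Real.log (1 / q), 1, one_div_nonneg.2 (Real.log_pos hβ).le,
    one_div_nonneg.2 (Real.log_pos (one_lt_one_div hq₀ hq₁)).le, zero_le_one,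
    fun μ₀ hμ₀ ε hε seq hseq0 hrec L hL => ?_⟩
  have hseq (t : ℕ) : seq t ∈ Set.Ioc 0 1 := by
    induction t with
    | zero => exact hseq0 ▸ hμ₀
    | succ t ih => exact hrec t ▸ apply_mem_Ioc_of_concaveOn hconc hmono hf0 hx hfix ih
  have hseqI (t : ℕ) : seq t ∈ Set.Icc 0 1 := Set.Ioc_subset_Icc_self (hseq t)
  obtain ⟨t, s, rfl, hβt, hqs⟩ := exists_add_eq_of_log_le hβ hq₀ hq₁ hμ₀ hε hL
  have hescape : h ≤ seq t := by
    have := min_pow_mul_le_seq_of_concaveOn hconc hmono hf0 hh hgain.le hseqI hrec t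
    rwa [hseq0, min_eq_left (hh.2.trans hβt)] at this
  obtain ⟨-, hdist⟩ := le_seq_and_sub_seq_le_pow_of_concaveOn hconc hmono hh.1.le hhx hx.2 hfix
    hgain.le hq₀.le (le_max_left _ _) hseqI hrec hescape s
  have hmax : max (x - seq t) 0 ≤ x := max_le (by linarith [(hseq t).1]) hx.1.le
  nlinarith [mul_le_mul hqs hmax (le_max_right _ _) hε.1.le]

end ConcaveIteration

section MajorityMap

open Polynomial

lemma majF_eq_eval (k : ℕ) :
    majF k = fun p =>
      (∑ j ∈ Icc (k + 1) (2 * k + 1), bernsteinPolynomial ℝ (2 * k + 1) j).eval p := by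
  ext p
  simp [majF, eval_finsetSum, bernsteinPolynomial]

lemma derivative_sum_bernsteinPolynomial_Icc (k : ℕ) :
    derivative (∑ j ∈ Icc (k + 1) (2 * k + 1), bernsteinPolynomial ℝ (2 * k + 1) j) =
      (2 * k + 1 : ℝ[X]) * bernsteinPolynomial ℝ (2 * k) k := by
  have htel : ∑ i ∈ Icc k (2 * k),
      (bernsteinPolynomial ℝ (2 * k) i - bernsteinPolynomial ℝ (2 * k) (i + 1)) =
        bernsteinPolynomial ℝ (2 * k) k := by
    rw [← neg_inj, ← sum_neg_distrib]
    simp only [neg_sub]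
    rw [sum_Icc_sub (by omega), bernsteinPolynomial.eq_zero_of_lt _ (by omega), zero_sub]
  rw [derivative_sum, ← map_add_right_Icc, sum_map]
  simp only [addRightEmbedding_apply, bernsteinPolynomial.derivative_succ, Nat.add_sub_cancel,
    ← mul_sum, htel]
  push_cast
  ring

lemma hasDerivAt_majF (k : ℕ) (p : ℝ) :
    HasDerivAt (majF k) ((2 * k + 1) * Nat.choose (2 * k) k * (p * (1 - p)) ^ k) p := by
  rw [majF_eq_eval]
  refine (Polynomial.hasDerivAt _ p).congr_deriv ?_
  rw [derivative_sum_bernsteinPolynomial_Icc]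
  simp only [eval_mul, eval_add, eval_ofNat, eval_one, eval_natCast, bernsteinPolynomial, eval_pow,
    eval_X, eval_sub]
  rw [show 2 * k - k = k by omega, mul_pow]
  ring

lemma hasDerivAt_majMap (k : ℕ) (v : ℝ) :
    HasDerivAt (majMap k) (majPrimeZero k * (1 - v ^ 2) ^ k) v := by
  have hp : HasDerivAt (fun v : ℝ => (1 + v) / 2) (1 / 2) v :=
    ((hasDerivAt_id v).const_add 1).div_const 2
  refine (((hasDerivAt_majF k _).comp v hp).const_mul 2 |>.sub_const 1).congr_deriv ?_
  rw [majPrimeZero, pow_mul, show (1 + v) / 2 * (1 - (1 + v) / 2) = (1 - v ^ 2) / 2 ^ 2 by ring,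
    div_pow]
  ring

lemma hasDerivAt_Tmap (k : ℕ) (ρ γ u : ℝ) :
    HasDerivAt (Tmap k ρ γ)
      (ρ * γ + (1 - ρ) * γ * (majPrimeZero k * (1 - (γ * u) ^ 2) ^ k)) u := by
  have hγu : HasDerivAt (fun u : ℝ => γ * u) γ u := by simpa using (hasDerivAt_id u).const_mul γ
  have h := ((hasDerivAt_id u).const_mul (ρ * γ)).add
    (((hasDerivAt_majMap k (γ * u)).comp u hγu).const_mul (1 - ρ))
  exact h.congr_deriv (by ring)

lemma sum_Icc_choose_upper_half (k : ℕ) :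
    ∑ j ∈ Icc (k + 1) (2 * k + 1), (2 * k + 1).choose j = 4 ^ k := by
  have hsplit := sum_range_add_sum_Ico (fun j => (2 * k + 1).choose j)
    (show k + 1 ≤ 2 * k + 1 + 1 by omega)
  rw [Nat.sum_range_choose_halfway, Nat.sum_range_choose, pow_succ, pow_mul] at hsplit
  rw [← Ico_add_one_right_eq_Icc]
  norm_num at hsplit
  omega

lemma majF_half (k : ℕ) : majF k (1 / 2) = 1 / 2 := by
  have hterm : ∀ j ∈ Icc (k + 1) (2 * k + 1),
      ((2 * k + 1).choose j : ℝ) * (1 / 2) ^ j * (1 - 1 / 2) ^ (2 * k + 1 - j) =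
        (2 * k + 1).choose j * (1 / 2) ^ (2 * k + 1) := by
    intro j hj
    rw [show (1 : ℝ) - 1 / 2 = 1 / 2 by norm_num, mul_assoc, ← pow_add,
      Nat.add_sub_of_le (mem_Icc.1 hj).2]
  rw [majF, sum_congr rfl hterm, ← sum_mul, ← Nat.cast_sum, sum_Icc_choose_upper_half, pow_succ,
    pow_mul]
  push_cast
  rw [← mul_assoc, ← mul_pow]
  norm_num

lemma Tmap_zero (k : ℕ) (ρ γ : ℝ) : Tmap k ρ γ 0 = 0 := by
  simp only [Tmap, majMap, mul_zero, add_zero, majF_half]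
  norm_num

lemma deriv_Tmap (k : ℕ) (ρ γ : ℝ) :
    deriv (Tmap k ρ γ) =
      fun u => ρ * γ + (1 - ρ) * γ * (majPrimeZero k * (1 - (γ * u) ^ 2) ^ k) :=
  funext fun u => (hasDerivAt_Tmap k ρ γ u).deriv

lemma differentiable_Tmap (k : ℕ) (ρ γ : ℝ) : Differentiable ℝ (Tmap k ρ γ) :=
  fun u => (hasDerivAt_Tmap k ρ γ u).differentiableAt

lemma majPrimeZero_nonneg (k : ℕ) : 0 ≤ majPrimeZero k := by
  unfold majPrimeZero
  positivity

lemma sq_mul_le_one {γ u : ℝ} (hγ₀ : 0 ≤ γ) (hγ₁ : γ ≤ 1) (hu : u ∈ Set.Icc (0 : ℝ) 1) :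
    (γ * u) ^ 2 ≤ 1 :=
  pow_le_one₀ (mul_nonneg hγ₀ hu.1) (mul_le_one₀ hγ₁ hu.1 hu.2)

lemma monotoneOn_Tmap (k : ℕ) {ρ γ : ℝ} (hρ₀ : 0 ≤ ρ) (hρ₁ : ρ ≤ 1) (hγ₀ : 0 ≤ γ) (hγ₁ : γ ≤ 1) :
    MonotoneOn (Tmap k ρ γ) (Set.Icc 0 1) := by
  refine monotoneOn_of_deriv_nonneg (convex_Icc 0 1)
    (differentiable_Tmap k ρ γ).continuous.continuousOn
    (differentiable_Tmap k ρ γ).differentiableOn fun u hu => ?_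
  have h₁ : 0 ≤ 1 - (γ * u) ^ 2 := sub_nonneg.2 (sq_mul_le_one hγ₀ hγ₁ (interior_subset hu))
  have h₂ : 0 ≤ 1 - ρ := sub_nonneg.2 hρ₁
  have := majPrimeZero_nonneg k
  rw [deriv_Tmap]
  positivity

lemma concaveOn_Tmap (k : ℕ) {ρ γ : ℝ} (hρ₁ : ρ ≤ 1) (hγ₀ : 0 ≤ γ) (hγ₁ : γ ≤ 1) :
    ConcaveOn ℝ (Set.Icc 0 1) (Tmap k ρ γ) := by
  refine AntitoneOn.concaveOn_of_deriv (convex_Icc 0 1)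
    (differentiable_Tmap k ρ γ).continuous.continuousOn
    (differentiable_Tmap k ρ γ).differentiableOn fun a ha b hb hab => ?_
  have := sq_mul_le_one hγ₀ hγ₁ (interior_subset hb)
  have := majPrimeZero_nonneg k
  have : 0 ≤ 1 - ρ := sub_nonneg.2 hρ₁
  rw [deriv_Tmap]
  dsimp only
  gcongr
  exact mul_nonneg hγ₀ (interior_subset ha).1

end MajorityMap

theorem mixing_depth_general (k : ℕ) (ρ γ : ℝ)
    (hρ : ρ ∈ Set.Ico (0 : ℝ) 1) (hγ : γ ∈ Set.Ioc (0 : ℝ) 1)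
    (μstar : ℝ) (hμ : μstar ∈ Set.Ioc (0 : ℝ) 1)
    (hfix : Tmap k ρ γ μstar = μstar)
    (huniq : ∀ y ∈ Set.Ioc (0 : ℝ) 1, Tmap k ρ γ y = y → y = μstar) :
    ∃ C₁ C₂ C₃ : ℝ, 0 ≤ C₁ ∧ 0 ≤ C₂ ∧ 0 ≤ C₃ ∧
      ∀ μ₀ ∈ Set.Ioc (0 : ℝ) 1, ∀ ε ∈ Set.Ioo (0 : ℝ) 1,
        ∀ seq : ℕ → ℝ, seq 0 = μ₀ → (∀ t, seq (t + 1) = Tmap k ρ γ (seq t)) →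
        ∀ L : ℕ, C₁ * Real.log (1 / μ₀) + C₂ * Real.log (1 / ε) + C₃ ≤ L →
          (1 - ε) * μstar ≤ seq L :=
  (concaveOn_Tmap k hρ.2.le hγ.1.le hγ.2).exists_mixing_depth
    (monotoneOn_Tmap k hρ.1 hρ.2.le hγ.1.le hγ.2) (Tmap_zero k ρ γ) hμ hfix huniq

/-- Finite-depth convergence (mixing depth): in the supercritical regime there are
constants `C₁, C₂, C₃ ≥ 0` depending only on `(b, ρ, γ)` such that for every starting
point `μ₀ ∈ (0,1]` and tolerance `ε ∈ (0,1)`, the iterates satisfy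
`μ_L ≥ (1-ε) μ*` for all depths `L ≥ C₁ log(1/μ₀) + C₂ log(1/ε) + C₃`. -/
theorem mixing_depth (k : ℕ) (hk : 1 ≤ k) (ρ γ : ℝ)
    (hρ : ρ ∈ Set.Ico (0 : ℝ) 1) (hγ : γ ∈ Set.Ioc (0 : ℝ) 1)
    (hα : 1 < alphaGain k ρ γ)
    (μstar : ℝ) (hμ : μstar ∈ Set.Ioc (0 : ℝ) 1)
    (hfix : Tmap k ρ γ μstar = μstar)
    (huniq : ∀ y ∈ Set.Ioc (0 : ℝ) 1, Tmap k ρ γ y = y → y = μstar) :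
    ∃ C₁ C₂ C₃ : ℝ, 0 ≤ C₁ ∧ 0 ≤ C₂ ∧ 0 ≤ C₃ ∧
      ∀ μ₀ ∈ Set.Ioc (0 : ℝ) 1, ∀ ε ∈ Set.Ioo (0 : ℝ) 1,
        ∀ seq : ℕ → ℝ, seq 0 = μ₀ → (∀ t, seq (t + 1) = Tmap k ρ γ (seq t)) →
        ∀ L : ℕ, C₁ * Real.log (1 / μ₀) + C₂ * Real.log (1 / ε) + C₃ ≤ L →
          (1 - ε) * μstar ≤ seq L :=
  mixing_depth_general k ρ γ hρ hγ μstar hμ hfix huniq
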